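/- Suppose o = {o₁,…,o_{n+1}} with o₁ < … < o_{n+1} and there exists π ∈ 𝒫 with (o \ {o_{n+1}})^π < o \ {o_{n+1}}. Then o^π < o; i.e., non-canonicity of the parent set implies non-canonicity of the set. -/

import Mathlib

/-- Objects built inductively from atoms by finite tuples and finite sets
(a set node carries the list of its elements). -/
inductive Obj (A : Type) : Type
  | atom : A → Obj A
  | tup  : List (Obj A) → Obj A
  | sett : List (Obj A) → Obj A

/-- Applying a map on atoms to an object, recursively. -/
def Obj.applyPerm {A : Type} (π : A → A) : Obj A → Obj A
  | .atom a => .atom (π a)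
  | .tup l => .tup (l.attach.map (fun o => Obj.applyPerm π o.1))
  | .sett l => .sett (l.attach.map (fun o => Obj.applyPerm π o.1))
decreasing_by all_goals (have := List.sizeOf_lt_of_mem o.2; simp at this ⊢; omega)

/-- The list of atoms occurring in an object. -/
def Obj.atomsList {A : Type} : Obj A → List A
  | .atom a => [a]
  | .tup l => l.attach.flatMap (fun o => Obj.atomsList o.1)
  | .sett l => l.attach.flatMap (fun o => Obj.atomsList o.1)
decreasing_by all_goals (have := List.sizeOf_lt_of_mem o.2; simp at this ⊢; omega)

/-- The set of atoms occurring in an object. -/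
def Obj.atoms {A : Type} (o : Obj A) : Set A := {a | a ∈ o.atomsList}

/-- Well-formed objects: the element lists of set nodes are strictly sorted
(so they faithfully represent finite sets, listed in increasing order). -/
def Obj.WF {A : Type} [LinearOrder (Obj A)] : Obj A → Prop
  | .atom _ => True
  | .tup l => ∀ o ∈ l, Obj.WF o
  | .sett l => l.Pairwise (· < ·) ∧ ∀ o ∈ l, Obj.WF o

/-- Applying a map on atoms to an object, recursively; the element list of a
set node is re-sorted, so that set nodes keep representing sets. -/
def Obj.applyPermS {A : Type} [LinearOrder (Obj A)] (π : A → A) : Obj A → Obj A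
  | .atom a => .atom (π a)
  | .tup l => .tup (l.attach.map (fun o => Obj.applyPermS π o.1))
  | .sett l => .sett ((l.attach.map (fun o => Obj.applyPermS π o.1)).mergeSort
      (fun a b => decide (a ≤ b)))
decreasing_by all_goals (have := List.sizeOf_lt_of_mem o.2; simp at this ⊢; omega)

/-!
A permutation of the atoms acts injectively on well-formed objects (its inverse undoes it), so
the image of `o_{n+1}` differs from the images of `o₁, …, o_n`, and the sorted image of `o` is
the sorted image of the parent with that one new element inserted. If the parent's sorted
image is lexicographically below `[o₁, …, o_n]`, the insertion keeps it below
`[o₁, …, o_{n+1}]`: either it happens before the first difference, where the new element is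
then below the entry of `o`, or it leaves that first difference in place.
-/

namespace List

variable {α : Type*} [LinearOrder α]

theorem pairwise_lt_mergeSort_of_nodup {m : List α} (hm : m.Nodup) :
    (m.mergeSort (fun a b => decide (a ≤ b))).Pairwise (· < ·) :=
  sortedLT_iff_pairwise.mp <|
    (sortedLE_iff_pairwise.mpr (pairwise_mergeSort' _ m)).sortedLT_of_nodup
      ((mergeSort_perm m _).nodup_iff.mpr hm)

theorem mergeSort_append_singleton (m : List α) (y : α) :
    (m ++ [y]).mergeSort (fun a b => decide (a ≤ b))
      = (m.mergeSort (fun a b => decide (a ≤ b))).orderedInsert (· ≤ ·) y :=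
  Perm.eq_of_pairwise' (pairwise_mergeSort' _ _) ((pairwise_mergeSort' _ _).orderedInsert y _) <|
    (mergeSort_perm _ _).trans <| perm_append_singleton y m |>.trans <|
      ((mergeSort_perm m _).symm.cons y).trans (perm_orderedInsert _ _ _).symm

theorem Lex.orderedInsert_lt_append_singleton {y z : α} :
    ∀ {m l : List α}, Lex (· < ·) m l → m.length = l.length → y ∉ m →
      Lex (· < ·) (m.orderedInsert (· ≤ ·) y) (l ++ [z])
  | _, _, .nil, hlen, _ => by simp at hlen
  | a :: m, _, .rel hab, _, _ => by
    by_cases hya : y ≤ a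
    · rw [orderedInsert_cons_of_le _ _ hya]
      exact .rel (hya.trans_lt hab)
    · rw [orderedInsert_cons, if_neg hya]
      exact .rel hab
  | a :: m, _, .cons h, hlen, hy => by
    by_cases hya : y ≤ a
    · rw [orderedInsert_cons_of_le _ _ hya]
      exact .rel (hya.lt_of_ne fun hya => hy (hya ▸ mem_cons_self))
    · rw [orderedInsert_cons, if_neg hya, cons_append]
      exact .cons (h.orderedInsert_lt_append_singleton (by simpa using hlen) (by simp_all))

theorem Lex.mergeSort_append_singleton {m l : List α} {y z : α}
    (h : Lex (· < ·) (m.mergeSort (fun a b => decide (a ≤ b))) l) (hlen : m.length = l.length)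
    (hy : y ∉ m) :
    Lex (· < ·) ((m ++ [y]).mergeSort (fun a b => decide (a ≤ b))) (l ++ [z]) := by
  rw [List.mergeSort_append_singleton]
  exact h.orderedInsert_lt_append_singleton (by simpa using hlen)
    (by simpa [(mergeSort_perm m _).mem_iff] using hy)

end List

namespace Obj

variable {A : Type} [LinearOrder (Obj A)]

@[simp]
theorem applyPermS_tup (π : A → A) (m : List (Obj A)) :
    (tup m).applyPermS π = tup (m.map (applyPermS π)) := by
  rw [applyPermS]
  simp

@[simp]
theorem applyPermS_sett (π : A → A) (m : List (Obj A)) :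
    (sett m).applyPermS π
      = sett ((m.map (applyPermS π)).mergeSort (fun a b => decide (a ≤ b))) := by
  rw [applyPermS]
  simp

theorem applyPermS_applyPermS_of_leftInverse {f g : A → A} (hgf : Function.LeftInverse g f) :
    ∀ o : Obj A, o.WF → (o.applyPermS f).applyPermS g = o
  | atom a, _ => by simp [applyPermS, hgf a]
  | tup m, hwf => by
    rw [WF] at hwf
    have ih : ∀ o ∈ m, (o.applyPermS f).applyPermS g = o := fun o ho =>
      applyPermS_applyPermS_of_leftInverse hgf o (hwf o ho)
    rw [applyPermS_tup, applyPermS_tup, List.map_map]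
    exact congrArg tup ((List.map_congr_left ih).trans (List.map_id m))
  | sett m, hwf => by
    rw [WF] at hwf
    have ih : ∀ o ∈ m, (o.applyPermS f).applyPermS g = o := fun o ho =>
      applyPermS_applyPermS_of_leftInverse hgf o (hwf.2 o ho)
    simp only [applyPermS_sett]
    refine congrArg sett (List.Perm.eq_of_pairwise' (List.pairwise_mergeSort' _ _)
      (hwf.1.imp le_of_lt) ?_)
    refine (List.mergeSort_perm _ _).trans (((List.mergeSort_perm _ _).map _).trans ?_)
    rw [List.map_map]
    exact .of_eq ((List.map_congr_left ih).trans (List.map_id m))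
decreasing_by all_goals (have := List.sizeOf_lt_of_mem ho; simp at this ⊢; omega)

theorem injOn_applyPermS (π : Equiv.Perm A) : Set.InjOn (applyPermS π) {o : Obj A | o.WF} :=
  Set.LeftInvOn.injOn (f₁' := applyPermS π.symm) fun o ho =>
    applyPermS_applyPermS_of_leftInverse π.leftInverse_symm o ho

end Obj

theorem set_noncanonical_of_parent_general {A : Type} [LinearOrder (Obj A)]
    (hsett : ∀ l₁ l₂ : List (Obj A), l₁.Pairwise (· < ·) → l₂.Pairwise (· < ·) →
        (Obj.sett l₁ < Obj.sett l₂ ↔ List.Lex (· < ·) l₁ l₂))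
    (l : List (Obj A)) (x : Obj A) (hwf : (Obj.sett (l ++ [x])).WF)
    (π : Equiv.Perm A)
    (hlt : (Obj.sett l).applyPermS π < Obj.sett l) :
    (Obj.sett (l ++ [x])).applyPermS π < Obj.sett (l ++ [x]) := by
  rw [Obj.WF] at hwf
  obtain ⟨hsorted, hwf_mem⟩ := hwf
  have hnodup : (l.map (Obj.applyPermS π) ++ [x.applyPermS π]).Nodup := by
    simpa using hsorted.nodup.map_on fun a ha b hb =>
      Obj.injOn_applyPermS π (hwf_mem a ha) (hwf_mem b hb)
  have hx : x.applyPermS π ∉ l.map (Obj.applyPermS π) := fun hmem =>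
    List.disjoint_of_nodup_append hnodup hmem (List.mem_singleton_self _)
  rw [Obj.applyPermS_sett] at hlt ⊢
  rw [hsett _ _ (List.pairwise_lt_mergeSort_of_nodup hnodup.of_append_left)
    (hsorted.sublist (List.sublist_append_left l [x]))] at hlt
  rw [List.map_append, List.map_singleton,
    hsett _ _ (List.pairwise_lt_mergeSort_of_nodup hnodup) hsorted]
  exact hlt.mergeSort_append_singleton (by simp) hx

/-- let o = {o₁,…,o_{n+1}} with o₁ < … < o_{n+1} (so the set node
lists its elements in increasing order and the last one is the maximum). If
π ∈ 𝒫 makes the parent set o \ {o_{n+1}} strictly smaller, then o^π < o: a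
non-canonical parent set implies a non-canonical set. -/
theorem set_noncanonical_of_parent {A : Type} [LinearOrder A] [LinearOrder (Obj A)] [WellFoundedLT (Obj A)]
    (hatom : ∀ a b : A, Obj.atom a < Obj.atom b ↔ a < b)
    (htup : ∀ l₁ l₂ : List (Obj A), l₁.length = l₂.length →
        (Obj.tup l₁ < Obj.tup l₂ ↔ List.Lex (· < ·) l₁ l₂))
    (hsett : ∀ l₁ l₂ : List (Obj A), l₁.Pairwise (· < ·) → l₂.Pairwise (· < ·) →
        (Obj.sett l₁ < Obj.sett l₂ ↔ List.Lex (· < ·) l₁ l₂))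
    (uset : A → Set A) (h1 : ∀ a, a ∈ uset a)
    (h2 : ∀ a b, uset a = uset b ∨ uset a ∩ uset b = ∅)
    (l : List (Obj A)) (x : Obj A) (hwf : (Obj.sett (l ++ [x])).WF)
    (π : Equiv.Perm A) (hπ : ∀ a, π a ∈ uset a)
    (hlt : (Obj.sett l).applyPermS π < Obj.sett l) :
    (Obj.sett (l ++ [x])).applyPermS π < Obj.sett (l ++ [x]) :=
  set_noncanonical_of_parent_general hsett l x hwf π hlt
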